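/- Puschnigg's product map: for unital algebras A and B, the map X²(A ⊗ B) → X(A) ⊗ X(B) defined on generators by a_0b_0 ↦ a_0 ⊗ b_0; a_0b_0 d(a_1b_1) ↦ ½ a_0da_1 ⊗ [b_0,b_1]_+ + ½ [a_0,a_1]_+ ⊗ b_0db_1; a_0b_0 d(a_1b_1) d(a_2b_2) ↦ ½ a_0d(a_1a_2) ⊗ b_0b_1 db_2 − ½ a_0a_1 da_2 ⊗ b_0d(b_1b_2), is a well-defined morphism of supercomplexes (commutes with the X-complex differentials b and d), where [a,b]_+ = ab + ba and the tensor product of supercomplexes carries the usual differential. -/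

import Mathlib

/-!
Statement 15.  Puschnigg's product map `X²(A ⊗ B) → X(A) ⊗ X(B)` (defined
on generators by
`a₀b₀ ↦ a₀ ⊗ b₀`,
`a₀b₀ d(a₁b₁) ↦ ½ a₀da₁ ⊗ [b₀,b₁]₊ + ½ [a₀,a₁]₊ ⊗ b₀db₁`,
`a₀b₀ d(a₁b₁) d(a₂b₂) ↦ ½ a₀d(a₁a₂) ⊗ b₀b₁db₂ − ½ a₀a₁da₂ ⊗ b₀d(b₁b₂)`)
is a well-defined morphism of supercomplexes.  Here `Ω¹A = A ⊗ Ā`,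
`Ω¹A_♮ = Ω¹A/[A,Ω¹A]`, `Ω²A = A ⊗ Ā ⊗ Ā`, `X(A) : A ⇄ Ω¹A_♮`, and
`X²(A) : A ⊕ Ω²A_♮ ⇄ Ω¹A` with differentials `b + dN`.
-/

open TensorProduct

noncomputable section Stmt15

variable (K : Type) [Field K] (A : Type) [Ring A] [Algebra K A]

/-- `K·1 ⊆ A`. -/
def unitSpan : Submodule K A := Submodule.span K {(1 : A)}

/-- `Ā = A / K·1`. -/
abbrev Abar : Type _ := A ⧸ unitSpan K A

/-- `Ω¹A = A ⊗ Ā`. -/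
abbrev Om1 : Type _ := A ⊗[K] Abar K A

variable {K A}

/-- The 1-form `a₀ da₁`. -/
def om1 (a₀ a₁ : A) : Om1 K A := a₀ ⊗ₜ[K] Submodule.Quotient.mk a₁

variable (K A)

/-- The commutator subspace `[A, Ω¹A]`, spanned by
`a₀ d(a₁ a) - (a₀ a₁) da - (a a₀) da₁`. -/
def natRel1 : Submodule K (Om1 K A) :=
  Submodule.span K
    {ω | ∃ a a₀ a₁ : A, ω = om1 a₀ (a₁ * a) - om1 (a₀ * a₁) a - om1 (a * a₀) a₁}

/-- `Ω¹A_♮ = Ω¹A / [A, Ω¹A]`. -/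
abbrev Om1n : Type _ := Om1 K A ⧸ natRel1 K A

/-- `Ω²A = A ⊗ Ā ⊗ Ā`. -/
abbrev Om2 : Type _ := A ⊗[K] (Abar K A ⊗[K] Abar K A)

variable {K A}

/-- The 2-form `a₀ da₁ da₂`. -/
def om2 (a₀ a₁ a₂ : A) : Om2 K A :=
  a₀ ⊗ₜ[K] (Submodule.Quotient.mk a₁ ⊗ₜ[K] Submodule.Quotient.mk a₂)

/-- The class of `a₀ da₁` in `Ω¹A_♮`. -/
def om1n (a₀ a₁ : A) : Om1n K A := Submodule.Quotient.mk (om1 a₀ a₁)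

variable (K A)

/-- The cocommutator relations on 2-forms (via the Leibniz rule). -/
def natRel2 : Submodule K (Om2 K A) :=
  Submodule.span K
    {ω | ∃ a a₀ a₁ a₂ : A, ω =
      om2 a₀ a₁ (a₂ * a) - om2 a₀ (a₁ * a₂) a + om2 (a₀ * a₁) a₂ a
        - om2 (a * a₀) a₁ a₂}

/-- `Ω²A_♮`. -/
abbrev Om2n : Type _ := Om2 K A ⧸ natRel2 K A

end Stmt15
noncomputable section PuschniggAux

open TensorProduct

variable {K : Type} [Field K]

section RingAux
variable (K) (R : Type) [Ring R] [Algebra K R]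

/-- `om1n` as a bilinear map. -/
def om1nL : R →ₗ[K] R →ₗ[K] Om1n K R :=
  ((TensorProduct.mk K R (Abar K R)).compl₂ (unitSpan K R).mkQ).compr₂ (natRel1 K R).mkQ

variable {K R}

@[simp] lemma om1nL_apply (a₀ a₁ : R) : om1nL K R a₀ a₁ = om1n a₀ a₁ := rfl

@[simp] lemma om1n_one_right (a : R) : (om1n a 1 : Om1n K R) = 0 := by
  have h1 : (Submodule.Quotient.mk (1 : R) : Abar K R) = 0 :=
    (Submodule.Quotient.mk_eq_zero _).2 (Submodule.mem_span_singleton_self _)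
  simp [om1n, om1, h1]

lemma om1n_leibniz (a₀ a₁ a₂ : R) :
    (om1n a₀ (a₁ * a₂) : Om1n K R) = om1n (a₀ * a₁) a₂ + om1n (a₂ * a₀) a₁ := by
  have h : (Submodule.Quotient.mk (om1 a₀ (a₁ * a₂) - om1 (a₀ * a₁) a₂ - om1 (a₂ * a₀) a₁) :
      Om1n K R) = 0 :=
    (Submodule.Quotient.mk_eq_zero _).2 (Submodule.subset_span ⟨a₂, a₀, a₁, rfl⟩)
  rw [Submodule.Quotient.mk_sub, Submodule.Quotient.mk_sub, sub_sub, sub_eq_zero] at h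
  exact h

lemma om1_add₀ (x x' y : R) : (om1 (x + x') y : Om1 K R) = om1 x y + om1 x' y := by
  simp [om1, add_tmul]

lemma om1_add₁ (x y y' : R) : (om1 x (y + y') : Om1 K R) = om1 x y + om1 x y' := by
  simp [om1, Submodule.Quotient.mk_add, tmul_add]

lemma om1_smul₀ (c : K) (x y : R) : (om1 (c • x) y : Om1 K R) = c • om1 x y := by
  simp [om1, smul_tmul']

lemma om1_smul₁ (c : K) (x y : R) : (om1 x (c • y) : Om1 K R) = c • om1 x y := by
  simp [om1, Submodule.Quotient.mk_smul, tmul_smul]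

lemma om2_add₀ (x x' y z : R) : (om2 (x + x') y z : Om2 K R) = om2 x y z + om2 x' y z := by
  simp [om2, add_tmul]

lemma om2_add₁ (x y y' z : R) : (om2 x (y + y') z : Om2 K R) = om2 x y z + om2 x y' z := by
  simp [om2, Submodule.Quotient.mk_add, add_tmul, tmul_add]

lemma om2_add₂ (x y z z' : R) : (om2 x y (z + z') : Om2 K R) = om2 x y z + om2 x y z' := by
  simp [om2, Submodule.Quotient.mk_add, tmul_add]

lemma om2_smul₀ (c : K) (x y z : R) : (om2 (c • x) y z : Om2 K R) = c • om2 x y z := by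
  simp [om2, smul_tmul']

lemma om2_smul₁ (c : K) (x y z : R) : (om2 x (c • y) z : Om2 K R) = c • om2 x y z := by
  rw [om2, om2, Submodule.Quotient.mk_smul, ← smul_tmul', tmul_smul]

lemma om2_smul₂ (c : K) (x y z : R) : (om2 x y (c • z) : Om2 K R) = c • om2 x y z := by
  simp [om2, Submodule.Quotient.mk_smul, tmul_smul]

variable (K R)

/-- multiplication as a linear map on the tensor square -/
def mulT : R ⊗[K] R →ₗ[K] R := TensorProduct.lift (LinearMap.mul K R)

/-- anticommutator as a linear map on the tensor square -/
def mulP : R ⊗[K] R →ₗ[K] R := TensorProduct.lift (LinearMap.mul K R + (LinearMap.mul K R).flip)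

/-- `om1n` on the tensor square -/
def om1nT : R ⊗[K] R →ₗ[K] Om1n K R := TensorProduct.lift (om1nL K R)

/-- `a₀ ⊗ a₁ ⊗ a₂ ↦ a₀ d(a₁ a₂)` -/
def uT : R ⊗[K] (R ⊗[K] R) →ₗ[K] Om1n K R := om1nT K R ∘ₗ map LinearMap.id (mulT K R)

/-- `a₀ ⊗ a₁ ⊗ a₂ ↦ (a₀ a₁) da₂` -/
def vT : R ⊗[K] (R ⊗[K] R) →ₗ[K] Om1n K R :=
  om1nT K R ∘ₗ map (mulT K R) LinearMap.id ∘ₗ (TensorProduct.assoc K R R R).symm.toLinearMap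

variable {K R}

@[simp] lemma mulT_apply (a b : R) : mulT K R (a ⊗ₜ[K] b) = a * b := rfl

@[simp] lemma mulP_apply (a b : R) : mulP K R (a ⊗ₜ[K] b) = a * b + b * a := rfl

@[simp] lemma om1nT_apply (a b : R) : om1nT K R (a ⊗ₜ[K] b) = om1n a b := rfl

@[simp] lemma uT_apply (a b c : R) : uT K R (a ⊗ₜ[K] (b ⊗ₜ[K] c)) = om1n a (b * c) := by
  simp [uT]

@[simp] lemma vT_apply (a b c : R) : vT K R (a ⊗ₜ[K] (b ⊗ₜ[K] c)) = om1n (a * b) c := by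
  simp [vT]

end RingAux

/-- lift a bilinear map through a quotient in the second variable -/
def qLift {M N P : Type} [AddCommGroup M] [Module K M] [AddCommGroup N] [Module K N]
    [AddCommGroup P] [Module K P]
    (p : Submodule K N) (g : M →ₗ[K] N →ₗ[K] P) (h : ∀ x, ∀ y ∈ p, g x y = 0) :
    M →ₗ[K] (N ⧸ p) →ₗ[K] P where
  toFun x := p.liftQ (g x) fun y hy => by simpa [LinearMap.mem_ker] using h x y hy
  map_add' x y := Submodule.linearMap_qext _ (by ext z; simp)
  map_smul' c x := Submodule.linearMap_qext _ (by ext z; simp)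

@[simp] lemma qLift_apply {M N P : Type} [AddCommGroup M] [Module K M] [AddCommGroup N]
    [Module K N] [AddCommGroup P] [Module K P]
    (p : Submodule K N) (g : M →ₗ[K] N →ₗ[K] P) (h : ∀ x, ∀ y ∈ p, g x y = 0)
    (x : M) (y : N) : qLift p g h x (Submodule.Quotient.mk y) = g x y := rfl

end PuschniggAux
noncomputable section PuschniggAux2
open TensorProduct
variable {K : Type} [Field K] {R : Type} [Ring R] [Algebra K R]

lemma om2_zero₀ (y z : R) : (om2 0 y z : Om2 K R) = 0 := by simp [om2, zero_tmul]
lemma om2_zero₁ (x z : R) : (om2 x 0 z : Om2 K R) = 0 := by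
  simp [om2, zero_tmul, tmul_zero]
lemma om2_zero₂ (x y : R) : (om2 x y 0 : Om2 K R) = 0 := by
  simp [om2, tmul_zero]
lemma om1_zero₀ (y : R) : (om1 0 y : Om1 K R) = 0 := by simp [om1, zero_tmul]
lemma om1_zero₁ (x : R) : (om1 x 0 : Om1 K R) = 0 := by simp [om1, tmul_zero]

lemma om1n_add₁ (x y y' : R) : (om1n x (y + y') : Om1n K R) = om1n x y + om1n x y' := by
  show om1nL K R x (y + y') = _
  rw [map_add]; rfl
lemma om1n_add₀ (x x' y : R) : (om1n (x + x') y : Om1n K R) = om1n x y + om1n x' y := by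
  show om1nL K R (x + x') y = _
  rw [map_add]; rfl
lemma om1n_smul₀ (c : K) (x y : R) : (om1n (c • x) y : Om1n K R) = c • om1n x y := by
  show om1nL K R (c • x) y = _
  rw [map_smul]; rfl
lemma om1n_smul₁ (c : K) (x y : R) : (om1n x (c • y) : Om1n K R) = c • om1n x y := by
  show om1nL K R x (c • y) = _
  rw [map_smul]; rfl
lemma om1n_zero₁ (x : R) : (om1n x 0 : Om1n K R) = 0 := by
  show om1nL K R x 0 = _
  rw [map_zero]

lemma pairL {M N : Type} [AddCommGroup M] [AddCommGroup N] (x y : M) :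
    ((x + y, 0) : M × N) = (x, 0) + (y, 0) := by simp
lemma pairR {M N : Type} [AddCommGroup M] [AddCommGroup N] (x y : N) :
    ((0, x + y) : M × N) = (0, x) + (0, y) := by simp

end PuschniggAux2
noncomputable section PuschniggAux3
@[simp] lemma pair00 {M N : Type} [AddCommGroup M] [AddCommGroup N] :
    ((0, 0) : M × N) = 0 := rfl
end PuschniggAux3
set_option maxHeartbeats 1000000
set_option synthInstance.maxHeartbeats 100000
noncomputable section ABAux
open TensorProduct

variable (K : Type) [Field K] (A B : Type) [Ring A] [Algebra K A] [Ring B] [Algebra K B]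

/-- The raw odd-degree Puschnigg map on `(A⊗B) ⊗ (A⊗B)`. -/
def foT : (A ⊗[K] B) ⊗[K] (A ⊗[K] B) →ₗ[K] (A ⊗[K] Om1n K B) × (Om1n K A ⊗[K] B) :=
  LinearMap.prod
    ((2:K)⁻¹ • (map (mulP K A) (om1nT K B) ∘ₗ (tensorTensorTensorComm K A B A B).toLinearMap))
    ((2:K)⁻¹ • (map (om1nT K A) (mulP K B) ∘ₗ (tensorTensorTensorComm K A B A B).toLinearMap))

variable {K A B}

@[simp] lemma foT_apply (a₀ a₁ : A) (b₀ b₁ : B) :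
    foT K A B ((a₀ ⊗ₜ[K] b₀) ⊗ₜ[K] (a₁ ⊗ₜ[K] b₁)) =
      ((2:K)⁻¹ • ((a₀*a₁+a₁*a₀) ⊗ₜ[K] om1n b₀ b₁),
       (2:K)⁻¹ • (om1n a₀ a₁ ⊗ₜ[K] (b₀*b₁+b₁*b₀))) := by
  simp [foT]

lemma foT_tmul_one (x : A ⊗[K] B) : foT K A B (x ⊗ₜ[K] 1) = 0 := by
  induction x using TensorProduct.induction_on with
  | zero => simp
  | tmul a b =>
      rw [Algebra.TensorProduct.one_def, foT_apply]
      simp [Prod.ext_iff]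
  | add x y hx hy => rw [add_tmul, map_add, hx, hy, add_zero]

variable (K A B)

/-- The odd-degree Puschnigg map `Ω¹(A⊗B) → X(A) ⊗ X(B) (odd part)`. -/
def foMap : Om1 K (A ⊗[K] B) →ₗ[K] (A ⊗[K] Om1n K B) × (Om1n K A ⊗[K] B) :=
  TensorProduct.lift (qLift (unitSpan K (A ⊗[K] B)) (TensorProduct.curry (foT K A B))
    (fun x y hy => by
      obtain ⟨c, rfl⟩ := Submodule.mem_span_singleton.1 hy
      rw [map_smul, TensorProduct.curry_apply, foT_tmul_one, smul_zero]))

variable {K A B}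

@[simp] lemma foMap_om1 (x₀ x₁ : A ⊗[K] B) :
    foMap K A B (om1 x₀ x₁) = foT K A B (x₀ ⊗ₜ[K] x₁) := rfl

variable (K A B)

/-- shuffle `(A⊗B) ⊗ ((A⊗B)⊗(A⊗B)) → (A⊗(A⊗A)) ⊗ (B⊗(B⊗B))`. -/
def sig3 : (A ⊗[K] B) ⊗[K] ((A ⊗[K] B) ⊗[K] (A ⊗[K] B)) →ₗ[K]
    (A ⊗[K] (A ⊗[K] A)) ⊗[K] (B ⊗[K] (B ⊗[K] B)) :=
  (tensorTensorTensorComm K A B (A ⊗[K] A) (B ⊗[K] B)).toLinearMap ∘ₗ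
    map LinearMap.id (tensorTensorTensorComm K A B A B).toLinearMap

/-- The raw even-degree (2-form part) Puschnigg map. -/
def g3T : (A ⊗[K] B) ⊗[K] ((A ⊗[K] B) ⊗[K] (A ⊗[K] B)) →ₗ[K] Om1n K A ⊗[K] Om1n K B :=
  (2:K)⁻¹ • ((map (uT K A) (vT K B) - map (vT K A) (uT K B)) ∘ₗ sig3 K A B)

variable {K A B}

@[simp] lemma g3T_apply (a₀ a₁ a₂ : A) (b₀ b₁ b₂ : B) :
    g3T K A B ((a₀ ⊗ₜ[K] b₀) ⊗ₜ[K] ((a₁ ⊗ₜ[K] b₁) ⊗ₜ[K] (a₂ ⊗ₜ[K] b₂))) =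
      (2:K)⁻¹ • (om1n a₀ (a₁*a₂) ⊗ₜ[K] om1n (b₀*b₁) b₂)
        - (2:K)⁻¹ • (om1n (a₀*a₁) a₂ ⊗ₜ[K] om1n b₀ (b₁*b₂)) := by
  simp [g3T, sig3, smul_sub]

lemma g3T_one₂ (x₀ x₂ : A ⊗[K] B) :
    g3T K A B (x₀ ⊗ₜ[K] ((1 : A ⊗[K] B) ⊗ₜ[K] x₂)) = 0 := by
  induction x₀ using TensorProduct.induction_on with
  | zero => rw [zero_tmul, map_zero]
  | tmul a₀ b₀ =>
      induction x₂ using TensorProduct.induction_on with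
      | zero => rw [tmul_zero, tmul_zero, map_zero]
      | tmul a₂ b₂ => rw [Algebra.TensorProduct.one_def, g3T_apply]; simp
      | add x y hx hy => rw [tmul_add, tmul_add, map_add, hx, hy, add_zero]
  | add x y hx hy => rw [add_tmul, map_add, hx, hy, add_zero]

lemma g3T_one₃ (x₀ x₁ : A ⊗[K] B) :
    g3T K A B (x₀ ⊗ₜ[K] (x₁ ⊗ₜ[K] (1 : A ⊗[K] B))) = 0 := by
  induction x₀ using TensorProduct.induction_on with
  | zero => rw [zero_tmul, map_zero]
  | tmul a₀ b₀ =>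
      induction x₁ using TensorProduct.induction_on with
      | zero => rw [zero_tmul, tmul_zero, map_zero]
      | tmul a₁ b₁ => rw [Algebra.TensorProduct.one_def, g3T_apply]; simp
      | add x y hx hy => rw [add_tmul, tmul_add, map_add, hx, hy, add_zero]
  | add x y hx hy => rw [add_tmul, map_add, hx, hy, add_zero]

variable (K A B)

/-- curried version of `g3T` in the shape `(X⊗X) →ₗ X →ₗ W`. -/
def G2 : ((A ⊗[K] B) ⊗[K] (A ⊗[K] B)) →ₗ[K] (A ⊗[K] B) →ₗ[K] Om1n K A ⊗[K] Om1n K B :=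
  TensorProduct.curry ((g3T K A B) ∘ₗ
    (TensorProduct.assoc K (A ⊗[K] B) (A ⊗[K] B) (A ⊗[K] B)).toLinearMap)

lemma G2_one (w : (A ⊗[K] B) ⊗[K] (A ⊗[K] B)) : G2 K A B w 1 = 0 := by
  induction w using TensorProduct.induction_on with
  | zero => rw [map_zero]; rfl
  | tmul x₀ x₁ =>
      show g3T K A B ((TensorProduct.assoc K _ _ _) ((x₀ ⊗ₜ[K] x₁) ⊗ₜ[K] 1)) = 0
      rw [TensorProduct.assoc_tmul]
      exact g3T_one₃ x₀ x₁
  | add x y hx hy => rw [map_add, LinearMap.add_apply, hx, hy, add_zero]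

def H1 : ((A ⊗[K] B) ⊗[K] (A ⊗[K] B)) →ₗ[K]
    Abar K (A ⊗[K] B) →ₗ[K] Om1n K A ⊗[K] Om1n K B :=
  qLift (unitSpan K (A ⊗[K] B)) (G2 K A B)
    (fun w y hy => by
      obtain ⟨c, rfl⟩ := Submodule.mem_span_singleton.1 hy
      rw [map_smul, G2_one, smul_zero])

def TT : (A ⊗[K] B) →ₗ[K] Abar K (A ⊗[K] B) →ₗ[K]
    Abar K (A ⊗[K] B) →ₗ[K] Om1n K A ⊗[K] Om1n K B :=
  qLift (N := A ⊗[K] B) (M := A ⊗[K] B) (P := Abar K (A ⊗[K] B) →ₗ[K] Om1n K A ⊗[K] Om1n K B) (unitSpan K (A ⊗[K] B)) (TensorProduct.curry (H1 K A B))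
    (fun x₀ y hy => by
      obtain ⟨c, rfl⟩ := Submodule.mem_span_singleton.1 hy
      rw [map_smul]
      suffices h : TensorProduct.curry (H1 K A B) x₀ 1 = 0 by rw [h, smul_zero]
      refine Submodule.linearMap_qext _ (LinearMap.ext fun x₂ => ?_)
      show H1 K A B (x₀ ⊗ₜ[K] 1) (Submodule.Quotient.mk x₂) = 0
      show G2 K A B (x₀ ⊗ₜ[K] 1) x₂ = 0
      show g3T K A B ((TensorProduct.assoc K _ _ _) ((x₀ ⊗ₜ[K] 1) ⊗ₜ[K] x₂)) = 0
      rw [TensorProduct.assoc_tmul]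
      exact g3T_one₂ x₀ x₂)

/-- The 2-form part of the even Puschnigg map, on `Ω²(A⊗B)`. -/
def feW : Om2 K (A ⊗[K] B) →ₗ[K] Om1n K A ⊗[K] Om1n K B :=
  TensorProduct.lift
    ((TensorProduct.lift.equiv (RingHom.id K) (Abar K (A ⊗[K] B)) (Abar K (A ⊗[K] B))
        (Om1n K A ⊗[K] Om1n K B)).toLinearMap ∘ₗ TT K A B)

variable {K A B}

@[simp] lemma feW_om2 (x₀ x₁ x₂ : A ⊗[K] B) :
    feW K A B (om2 x₀ x₁ x₂) = g3T K A B (x₀ ⊗ₜ[K] (x₁ ⊗ₜ[K] x₂)) := rfl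

end ABAux
noncomputable section RelAux
open TensorProduct
variable {K : Type} [Field K] {A B : Type} [Ring A] [Algebra K A] [Ring B] [Algebra K B]

lemma feW_rel (x x₀ x₁ x₂ : A ⊗[K] B) :
    feW K A B (om2 x₀ x₁ (x₂ * x) - om2 x₀ (x₁ * x₂) x + om2 (x₀ * x₁) x₂ x
      - om2 (x * x₀) x₁ x₂) = 0 := by
  simp only [map_sub, map_add]
  induction x using TensorProduct.induction_on with
  | zero =>
      simp only [mul_zero, zero_mul, om2_zero₀, om2_zero₂, map_zero]; abel
  | add w w' ih ih' =>
      simp only [mul_add, add_mul, om2_add₀, om2_add₂, map_add]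
      linear_combination (norm := module) ih + ih'
  | tmul a b =>
    induction x₀ using TensorProduct.induction_on with
    | zero =>
        simp only [mul_zero, zero_mul, om2_zero₀, map_zero]; abel
    | add w w' ih ih' =>
        simp only [mul_add, add_mul, om2_add₀, map_add]
        linear_combination (norm := module) ih + ih'
    | tmul a₀ b₀ =>
      induction x₁ using TensorProduct.induction_on with
      | zero =>
          simp only [mul_zero, zero_mul, om2_zero₀, om2_zero₁, map_zero]; abel
      | add w w' ih ih' =>
          simp only [mul_add, add_mul, om2_add₀, om2_add₁, map_add]
          linear_combination (norm := module) ih + ih'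
      | tmul a₁ b₁ =>
        induction x₂ using TensorProduct.induction_on with
        | zero =>
            simp only [mul_zero, zero_mul, om2_zero₁, om2_zero₂, map_zero]; abel
        | add w w' ih ih' =>
            simp only [mul_add, add_mul, om2_add₁, om2_add₂, map_add]
            linear_combination (norm := module) ih + ih'
        | tmul a₂ b₂ =>
            simp only [Algebra.TensorProduct.tmul_mul_tmul, feW_om2, g3T_apply]
            simp only [om1n_leibniz]
            simp only [mul_assoc]
            simp only [tmul_add, add_tmul, smul_add, smul_sub]
            module
end RelAux
noncomputable section FeMap
open TensorProduct
variable (K : Type) [Field K] (A B : Type) [Ring A] [Algebra K A] [Ring B] [Algebra K B]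

/-- The even-degree Puschnigg map. -/
def feMap : ((A ⊗[K] B) × Om2n K (A ⊗[K] B)) →ₗ[K]
    (A ⊗[K] B) × (Om1n K A ⊗[K] Om1n K B) :=
  LinearMap.prodMap LinearMap.id
    (Submodule.liftQ (natRel2 K (A ⊗[K] B)) (feW K A B)
      (by
        rw [natRel2, Submodule.span_le]
        rintro ω ⟨a, a₀, a₁, a₂, rfl⟩
        exact LinearMap.mem_ker.2 (feW_rel a a₀ a₁ a₂)))

variable {K A B}

@[simp] lemma feMap_mk (x : A ⊗[K] B) (ω : Om2 K (A ⊗[K] B)) :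
    feMap K A B (x, Submodule.Quotient.mk ω) = (x, feW K A B ω) := rfl

section Comm

lemma comm1 (h2 : (2 : K) ≠ 0)
    (bXA : Om1n K A →ₗ[K] A) (hbXA : ∀ a₀ a₁, bXA (om1n a₀ a₁) = a₀ * a₁ - a₁ * a₀)
    (dXA : A →ₗ[K] Om1n K A) (hdXA : ∀ a, dXA a = om1n 1 a)
    (bXB : Om1n K B →ₗ[K] B) (hbXB : ∀ b₀ b₁, bXB (om1n b₀ b₁) = b₀ * b₁ - b₁ * b₀)
    (dXB : B →ₗ[K] Om1n K B) (hdXB : ∀ b, dXB b = om1n 1 b)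
    (DE2 : ((A ⊗[K] B) × Om2n K (A ⊗[K] B)) →ₗ[K] Om1 K (A ⊗[K] B))
    (hDE2a : ∀ x : A ⊗[K] B, DE2 (x, 0) = om1 1 x)
    (hDE2b : ∀ x₀ x₁ x₂ : A ⊗[K] B,
      DE2 (0, Submodule.Quotient.mk (om2 x₀ x₁ x₂)) =
        -(om1 x₀ (x₁ * x₂) - om1 (x₀ * x₁) x₂ - om1 (x₂ * x₀) x₁)) :
    (LinearMap.prod
        ((TensorProduct.map LinearMap.id dXB) ∘ₗ LinearMap.fst K _ _ +
          (TensorProduct.map bXA LinearMap.id) ∘ₗ LinearMap.snd K _ _)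
        ((TensorProduct.map dXA LinearMap.id) ∘ₗ LinearMap.fst K _ _ -
          (TensorProduct.map LinearMap.id bXB) ∘ₗ LinearMap.snd K _ _)) ∘ₗ feMap K A B =
      foMap K A B ∘ₗ DE2 := by
  set Dev := LinearMap.prod
        ((TensorProduct.map LinearMap.id dXB) ∘ₗ
            LinearMap.fst K (A ⊗[K] B) (Om1n K A ⊗[K] Om1n K B) +
          (TensorProduct.map bXA LinearMap.id) ∘ₗ LinearMap.snd K _ _)
        ((TensorProduct.map dXA LinearMap.id) ∘ₗ LinearMap.fst K _ _ -
          (TensorProduct.map LinearMap.id bXB) ∘ₗ LinearMap.snd K _ _) with hDev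
  have key1 : ∀ x : A ⊗[K] B,
      Dev (feMap K A B (x, 0)) = foMap K A B (DE2 (x, 0)) := by
    intro x
    rw [hDE2a]
    induction x using TensorProduct.induction_on with
    | zero => simp [om1_zero₁]
    | add w w' ih ih' =>
        rw [om1_add₁, map_add, pairL, map_add, map_add, ih, ih']
    | tmul a b =>
        have hfe : feMap K A B (a ⊗ₜ[K] b, 0) = (a ⊗ₜ[K] b, 0) := by
          have h0 : ((a ⊗ₜ[K] b, 0) : _ × Om2n K (A ⊗[K] B)) =
              (a ⊗ₜ[K] b, Submodule.Quotient.mk (0 : Om2 K (A ⊗[K] B))) := by simp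
          rw [h0, feMap_mk, map_zero]
        rw [hfe, hDev]
        rw [show (1 : A ⊗[K] B) = (1:A) ⊗ₜ[K] (1:B) from Algebra.TensorProduct.one_def]
        rw [foMap_om1, foT_apply]
        simp only [LinearMap.prod_apply, LinearMap.add_apply, LinearMap.sub_apply,
          LinearMap.coe_comp, Function.comp_apply, LinearMap.fst_apply, LinearMap.snd_apply,
          map_zero, add_zero, sub_zero, map_tmul, LinearMap.id_coe, id_eq, hdXA, hdXB,
          one_mul, mul_one, Function.prod]
        rw [Prod.mk.injEq]
        constructor
        · simp only [tmul_add, add_tmul]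
          match_scalars <;> field_simp [h2] <;> norm_num
        · simp only [tmul_add, add_tmul]
          match_scalars <;> field_simp [h2] <;> norm_num
  have key2 : ∀ x₀ x₁ x₂ : A ⊗[K] B,
      Dev (feMap K A B (0, Submodule.Quotient.mk (om2 x₀ x₁ x₂))) =
        foMap K A B (DE2 (0, Submodule.Quotient.mk (om2 x₀ x₁ x₂))) := by
    intro x₀ x₁ x₂
    induction x₀ using TensorProduct.induction_on with
    | zero => rw [om2_zero₀]; simp
    | add w w' ih ih' =>
        rw [om2_add₀, Submodule.Quotient.mk_add, pairR, map_add, map_add, map_add, map_add,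
          ih, ih']
    | tmul a₀ b₀ =>
      induction x₁ using TensorProduct.induction_on with
      | zero => rw [om2_zero₁]; simp
      | add w w' ih ih' =>
          rw [om2_add₁, Submodule.Quotient.mk_add, pairR, map_add, map_add, map_add, map_add,
            ih, ih']
      | tmul a₁ b₁ =>
        induction x₂ using TensorProduct.induction_on with
        | zero => rw [om2_zero₂]; simp
        | add w w' ih ih' =>
            rw [om2_add₂, Submodule.Quotient.mk_add, pairR, map_add, map_add, map_add, map_add,
              ih, ih']
        | tmul a₂ b₂ =>
            rw [hDE2b, feMap_mk, feW_om2, g3T_apply, hDev]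
            simp only [Algebra.TensorProduct.tmul_mul_tmul]
            rw [map_neg, map_sub, map_sub, foMap_om1, foMap_om1, foMap_om1]
            simp only [LinearMap.prod_apply, LinearMap.add_apply, LinearMap.sub_apply,
              LinearMap.coe_comp, Function.comp_apply, LinearMap.fst_apply,
              LinearMap.snd_apply, map_zero, zero_add, add_zero, zero_sub, sub_zero,
              map_smul, map_sub, map_neg, map_tmul, LinearMap.id_coe, id_eq, hbXA, hbXB,
              foT_apply, Function.prod, Prod.neg_mk, Prod.mk_sub_mk]
            rw [Prod.mk.injEq]
            constructor
            · simp only [om1n_leibniz, mul_assoc, tmul_add, add_tmul, tmul_sub, sub_tmul,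
                smul_add, smul_sub, neg_add, neg_sub]
              module
            · simp only [om1n_leibniz, mul_assoc, tmul_add, add_tmul, tmul_sub, sub_tmul,
                smul_add, smul_sub, neg_add, neg_sub]
              module
  have key2' : ∀ ω : Om2 K (A ⊗[K] B),
      Dev (feMap K A B (0, Submodule.Quotient.mk ω)) =
        foMap K A B (DE2 (0, Submodule.Quotient.mk ω)) := by
    intro ω
    induction ω using TensorProduct.induction_on with
    | zero => simp
    | add p q ihp ihq =>
        rw [Submodule.Quotient.mk_add, pairR, map_add, map_add, map_add, map_add, ihp, ihq]
    | tmul x₀ t =>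
        induction t using TensorProduct.induction_on with
        | zero => rw [tmul_zero]; simp
        | add u v ihu ihv =>
            rw [tmul_add, Submodule.Quotient.mk_add, pairR, map_add, map_add, map_add, map_add,
              ihu, ihv]
        | tmul u v =>
            obtain ⟨x₁, rfl⟩ := Submodule.Quotient.mk_surjective _ u
            obtain ⟨x₂, rfl⟩ := Submodule.Quotient.mk_surjective _ v
            exact key2 x₀ x₁ x₂
  apply LinearMap.ext
  rintro ⟨x, w⟩
  obtain ⟨ω, rfl⟩ := Submodule.Quotient.mk_surjective _ w
  have hsplit : ((x, (Submodule.Quotient.mk ω : Om2n K (A ⊗[K] B)))) =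
      (x, (0 : Om2n K (A ⊗[K] B))) + (0, Submodule.Quotient.mk ω) := by simp
  rw [LinearMap.comp_apply, LinearMap.comp_apply, hsplit, map_add, map_add, map_add, map_add,
    key1 x, key2' ω]

lemma comm2 (h2 : (2 : K) ≠ 0)
    (bXA : Om1n K A →ₗ[K] A) (hbXA : ∀ a₀ a₁, bXA (om1n a₀ a₁) = a₀ * a₁ - a₁ * a₀)
    (dXA : A →ₗ[K] Om1n K A) (hdXA : ∀ a, dXA a = om1n 1 a)
    (bXB : Om1n K B →ₗ[K] B) (hbXB : ∀ b₀ b₁, bXB (om1n b₀ b₁) = b₀ * b₁ - b₁ * b₀)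
    (dXB : B →ₗ[K] Om1n K B) (hdXB : ∀ b, dXB b = om1n 1 b)
    (DO2 : Om1 K (A ⊗[K] B) →ₗ[K] ((A ⊗[K] B) × Om2n K (A ⊗[K] B)))
    (hDO2 : ∀ x₀ x₁ : A ⊗[K] B,
      DO2 (om1 x₀ x₁) =
        (x₀ * x₁ - x₁ * x₀, (2 : K) • Submodule.Quotient.mk (om2 1 x₀ x₁))) :
    (LinearMap.prod
        ((TensorProduct.map LinearMap.id bXB) ∘ₗ LinearMap.fst K _ _ +
          (TensorProduct.map bXA LinearMap.id) ∘ₗ LinearMap.snd K _ _)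
        ((TensorProduct.map dXA LinearMap.id) ∘ₗ LinearMap.fst K _ _ -
          (TensorProduct.map LinearMap.id dXB) ∘ₗ LinearMap.snd K _ _)) ∘ₗ foMap K A B =
      feMap K A B ∘ₗ DO2 := by
  set Dodd := LinearMap.prod
        ((TensorProduct.map LinearMap.id bXB) ∘ₗ
            LinearMap.fst K (A ⊗[K] Om1n K B) (Om1n K A ⊗[K] B) +
          (TensorProduct.map bXA LinearMap.id) ∘ₗ LinearMap.snd K _ _)
        ((TensorProduct.map dXA LinearMap.id) ∘ₗ LinearMap.fst K _ _ -
          (TensorProduct.map LinearMap.id dXB) ∘ₗ LinearMap.snd K _ _) with hDodd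
  have key : ∀ x₀ x₁ : A ⊗[K] B,
      Dodd (foMap K A B (om1 x₀ x₁)) = feMap K A B (DO2 (om1 x₀ x₁)) := by
    intro x₀ x₁
    induction x₀ using TensorProduct.induction_on with
    | zero => rw [om1_zero₀]; simp
    | add w w' ih ih' => simp only [om1_add₀, map_add]; rw [ih, ih']
    | tmul a₀ b₀ =>
      induction x₁ using TensorProduct.induction_on with
      | zero => rw [om1_zero₁]; simp
      | add w w' ih ih' => simp only [om1_add₁, map_add]; rw [ih, ih']
      | tmul a₁ b₁ =>
          rw [hDO2, Algebra.TensorProduct.tmul_mul_tmul,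
            Algebra.TensorProduct.tmul_mul_tmul,
            show ((2:K) • (Submodule.Quotient.mk
                (om2 (1 : A ⊗[K] B) (a₀ ⊗ₜ[K] b₀) (a₁ ⊗ₜ[K] b₁)) : Om2n K (A ⊗[K] B))) =
              Submodule.Quotient.mk ((2:K) •
                om2 (1 : A ⊗[K] B) (a₀ ⊗ₜ[K] b₀) (a₁ ⊗ₜ[K] b₁)) from
              (Submodule.Quotient.mk_smul _ _ _).symm,
            feMap_mk, map_smul,
            show (1 : A ⊗[K] B) = (1:A) ⊗ₜ[K] (1:B) from Algebra.TensorProduct.one_def,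
            feW_om2, g3T_apply, foMap_om1, foT_apply, hDodd]
          simp only [LinearMap.prod_apply, LinearMap.add_apply, LinearMap.sub_apply,
            LinearMap.coe_comp, Function.comp_apply, LinearMap.fst_apply,
            LinearMap.snd_apply, map_zero, add_zero, sub_zero, map_smul, map_add, map_sub,
            map_tmul, LinearMap.id_coe, id_eq, hbXA, hbXB, hdXA, hdXB, one_mul, mul_one,
            Function.prod]
          rw [Prod.mk.injEq]
          constructor
          · simp only [om1n_add₀, om1n_add₁, om1n_leibniz, one_mul, mul_one, tmul_add,
              add_tmul, tmul_sub, sub_tmul, smul_add, smul_sub]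
            match_scalars <;> field_simp [h2] <;> norm_num
          · simp only [om1n_add₀, om1n_add₁, om1n_leibniz, one_mul, mul_one, tmul_add,
              add_tmul, tmul_sub, sub_tmul, smul_add, smul_sub]
            match_scalars <;> field_simp [h2] <;> norm_num
  apply LinearMap.ext
  intro ω
  rw [LinearMap.comp_apply, LinearMap.comp_apply]
  induction ω using TensorProduct.induction_on with
  | zero => simp
  | add p q ihp ihq => simp only [map_add]; rw [ihp, ihq]
  | tmul x₀ u =>
      obtain ⟨x₁, rfl⟩ := Submodule.Quotient.mk_surjective _ u
      exact key x₀ x₁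

end Comm
end FeMap
theorem puschnigg_product_map_is_supercomplex_morphism
    {K : Type} [Field K] (h2 : (2 : K) ≠ 0)
    {A B : Type} [Ring A] [Algebra K A] [Ring B] [Algebra K B]
    -- the X-complex differentials of `A` and of `B`
    (bXA : Om1n K A →ₗ[K] A) (hbXA : ∀ a₀ a₁, bXA (om1n a₀ a₁) = a₀ * a₁ - a₁ * a₀)
    (dXA : A →ₗ[K] Om1n K A) (hdXA : ∀ a, dXA a = om1n 1 a)
    (bXB : Om1n K B →ₗ[K] B) (hbXB : ∀ b₀ b₁, bXB (om1n b₀ b₁) = b₀ * b₁ - b₁ * b₀)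
    (dXB : B →ₗ[K] Om1n K B) (hdXB : ∀ b, dXB b = om1n 1 b)
    -- the X²-complex differentials of `A ⊗ B` (`b + dN` truncated):
    -- even → odd: `(a, ω₂) ↦ da + bω₂`
    (DE2 : ((A ⊗[K] B) × Om2n K (A ⊗[K] B)) →ₗ[K] Om1 K (A ⊗[K] B))
    (hDE2a : ∀ x : A ⊗[K] B, DE2 (x, 0) = om1 1 x)
    (hDE2b : ∀ x₀ x₁ x₂ : A ⊗[K] B,
      DE2 (0, Submodule.Quotient.mk (om2 x₀ x₁ x₂)) =
        -(om1 x₀ (x₁ * x₂) - om1 (x₀ * x₁) x₂ - om1 (x₂ * x₀) x₁))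
    -- odd → even: `ω₁ ↦ bω₁ + 2 dω₁`
    (DO2 : Om1 K (A ⊗[K] B) →ₗ[K] ((A ⊗[K] B) × Om2n K (A ⊗[K] B)))
    (hDO2 : ∀ x₀ x₁ : A ⊗[K] B,
      DO2 (om1 x₀ x₁) =
        (x₀ * x₁ - x₁ * x₀, (2 : K) • Submodule.Quotient.mk (om2 1 x₀ x₁))) :
    -- the differentials of the supercomplex `X(A) ⊗ X(B)`
    let EAB := (A ⊗[K] B) × (Om1n K A ⊗[K] Om1n K B)
    let OAB := (A ⊗[K] Om1n K B) × (Om1n K A ⊗[K] B)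
    let DevAB : EAB →ₗ[K] OAB :=
      LinearMap.prod
        ((TensorProduct.map LinearMap.id dXB) ∘ₗ LinearMap.fst K _ _ +
          (TensorProduct.map bXA LinearMap.id) ∘ₗ LinearMap.snd K _ _)
        ((TensorProduct.map dXA LinearMap.id) ∘ₗ LinearMap.fst K _ _ -
          (TensorProduct.map LinearMap.id bXB) ∘ₗ LinearMap.snd K _ _)
    let DoddAB : OAB →ₗ[K] EAB :=
      LinearMap.prod
        ((TensorProduct.map LinearMap.id bXB) ∘ₗ LinearMap.fst K _ _ +
          (TensorProduct.map bXA LinearMap.id) ∘ₗ LinearMap.snd K _ _)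
        ((TensorProduct.map dXA LinearMap.id) ∘ₗ LinearMap.fst K _ _ -
          (TensorProduct.map LinearMap.id dXB) ∘ₗ LinearMap.snd K _ _)
    -- Puschnigg's map exists: linear maps satisfying the generator formulas
    -- and commuting with the differentials
    ∃ (fe : ((A ⊗[K] B) × Om2n K (A ⊗[K] B)) →ₗ[K] EAB)
      (fo : Om1 K (A ⊗[K] B) →ₗ[K] OAB),
      (∀ x : A ⊗[K] B, fe (x, 0) = (x, 0)) ∧
      (∀ a₀ a₁ a₂ : A, ∀ b₀ b₁ b₂ : B,
        fe (0, Submodule.Quotient.mk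
              (om2 (a₀ ⊗ₜ[K] b₀) (a₁ ⊗ₜ[K] b₁) (a₂ ⊗ₜ[K] b₂))) =
          (0, (2 : K)⁻¹ •
              (om1n a₀ (a₁ * a₂) ⊗ₜ[K] om1n (b₀ * b₁) b₂) -
            (2 : K)⁻¹ •
              (om1n (a₀ * a₁) a₂ ⊗ₜ[K] om1n b₀ (b₁ * b₂)))) ∧
      (∀ a₀ a₁ : A, ∀ b₀ b₁ : B,
        fo (om1 (a₀ ⊗ₜ[K] b₀) (a₁ ⊗ₜ[K] b₁)) =
          ((2 : K)⁻¹ • ((a₀ * a₁ + a₁ * a₀) ⊗ₜ[K] om1n b₀ b₁),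
           (2 : K)⁻¹ • (om1n a₀ a₁ ⊗ₜ[K] (b₀ * b₁ + b₁ * b₀)))) ∧
      DevAB ∘ₗ fe = fo ∘ₗ DE2 ∧
      DoddAB ∘ₗ fo = fe ∘ₗ DO2 := by
  intro EAB OAB DevAB DoddAB
  refine ⟨feMap K A B, foMap K A B, ?_, ?_, ?_,
    comm1 h2 bXA hbXA dXA hdXA bXB hbXB dXB hdXB DE2 hDE2a hDE2b,
    comm2 h2 bXA hbXA dXA hdXA bXB hbXB dXB hdXB DO2 hDO2⟩
  · intro x
    have h0 : ((x, 0) : (A ⊗[K] B) × Om2n K (A ⊗[K] B)) =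
        (x, Submodule.Quotient.mk (0 : Om2 K (A ⊗[K] B))) := by
      simp
    rw [h0, feMap_mk, map_zero]
  · intro a₀ a₁ a₂ b₀ b₁ b₂
    rw [feMap_mk, feW_om2, g3T_apply]
  · intro a₀ a₁ b₀ b₁
    rw [foMap_om1, foT_apply]
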